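/- arXiv:2512.19244 — 2 statements merged into one kernel-verified Lean document; each statement's English description precedes it below -/
import Mathlib

section
/- Let Λ_Fix be the lattice ℤ^15 with symmetric bilinear form given by the block-diagonal Gram matrix consisting of three 2×2 blocks [[0,1],[1,0]], one 8×8 block equal to −2 times the Cartan matrix of E8, and one 1×1 block (−2). Let Λ_Y be the lattice ℤ^16 with block-diagonal Gram matrix consisting of three 2×2 blocks [[0,2],[2,0]], one 8×8 block equal to the negative of the Cartan matrix of E8, and two 1×1 blocks (−2). Then the ℤ-linear map η: Λ_Fix → Λ_Y defined by (u, e, α) ↦ (u, 2e, α, α) (u ∈ ℤ^6 the U^3-part, e ∈ ℤ^8 the E8-part, α ∈ ℤ the last coordinate, duplicated into the last two coordinates of Λ_Y) is injective and satisfies (η x, η y)_{Λ_Y} = 2 (x, y)_{Λ_Fix} for all x, y ∈ Λ_Fix; moreover its image is not saturated: there exists y ∈ Λ_Y with y ∉ image(η) but 2y ∈ image(η). -/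
open Matrix

/-- A 6×6 matrix made of three 2×2 diagonal blocks `[[0,c],[c,0]]`
(the pairs of indices {0,1}, {2,3}, {4,5}). -/
def Ublock (c : ℤ) : Matrix (Fin 6) (Fin 6) ℤ :=
  fun i j => if i ≠ j ∧ i.val / 2 = j.val / 2 then c else 0

def eqY : (Fin 6 ⊕ Fin 8) ⊕ Fin 2 ≃ Fin 16 :=
  (Equiv.sumCongr finSumFinEquiv (Equiv.refl (Fin 2))).trans finSumFinEquiv

def eqFix : (Fin 6 ⊕ Fin 8) ⊕ Fin 1 ≃ Fin 15 :=
  (Equiv.sumCongr finSumFinEquiv (Equiv.refl (Fin 1))).trans finSumFinEquiv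

/-- Gram matrix of `Λ_Y = U(2)^3 ⊕ E8(-1) ⊕ ⟨-2⟩^2` on `ℤ^16`. -/
def GramY : Matrix (Fin 16) (Fin 16) ℤ :=
  (Matrix.reindex eqY eqY)
    (Matrix.fromBlocks
      (Matrix.fromBlocks (Ublock 2) 0 0 (-CartanMatrix.E₈)) 0 0
      (Matrix.diagonal fun _ => -2))

/-- Gram matrix of `Λ_Fix = U^3 ⊕ E8(-2) ⊕ ⟨-2⟩` on `ℤ^15`. -/
def GramFix : Matrix (Fin 15) (Fin 15) ℤ :=
  (Matrix.reindex eqFix eqFix)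
    (Matrix.fromBlocks
      (Matrix.fromBlocks (Ublock 1) 0 0 ((-2 : ℤ) • CartanMatrix.E₈)) 0 0
      (Matrix.diagonal fun _ => -2))

def pairY (x y : Fin 16 → ℤ) : ℤ := x ⬝ᵥ (GramY *ᵥ y)

def pairFix (x y : Fin 15 → ℤ) : ℤ := x ⬝ᵥ (GramFix *ᵥ y)

/-- The map `η : Λ_Fix → Λ_Y`, `(u, e, α) ↦ (u, 2e, α, α)`. -/
def etaMap (x : Fin 15 → ℤ) : Fin 16 → ℤ := fun i =>
  if _ : i.val < 6 then x ⟨i.val, by omega⟩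
  else if _ : i.val < 14 then 2 * x ⟨i.val, by omega⟩
  else x ⟨14, by omega⟩

/-- The matrix of `η`. -/
def Mmat : Matrix (Fin 16) (Fin 15) ℤ := fun i j =>
  if i.val < 6 then (if j.val = i.val then 1 else 0)
  else if i.val < 14 then (if j.val = i.val then 2 else 0)
  else (if j.val = 14 then 1 else 0)

lemma eta_eq (x : Fin 15 → ℤ) : etaMap x = Mmat *ᵥ x := by
  funext i
  fin_cases i <;>
    (simp [etaMap, Mmat, Matrix.mulVec, dotProduct, Fin.sum_univ_succ]; try rfl)

lemma key : Mmatᵀ * GramY * Mmat = (2 : ℤ) • GramFix := by decide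

/-- `η` is an injective ℤ-linear map multiplying the pairing by 2, whose image is
not saturated in `Λ_Y`. -/
theorem stmt0 :
    IsLinearMap ℤ etaMap ∧
    Function.Injective etaMap ∧
    (∀ x y : Fin 15 → ℤ, pairY (etaMap x) (etaMap y) = 2 * pairFix x y) ∧
    (∃ y : Fin 16 → ℤ, y ∉ Set.range etaMap ∧ (2 : ℤ) • y ∈ Set.range etaMap) := by
  refine ⟨⟨?_, ?_⟩, ?_, ?_, ?_⟩
  · intro x y
    funext i
    simp only [etaMap, Pi.add_apply]
    split_ifs <;> ring
  · intro c x
    funext i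
    simp only [etaMap, Pi.smul_apply, smul_eq_mul]
    split_ifs <;> ring
  · intro x y h
    funext j
    have hj := congrFun h ⟨j.val, by omega⟩
    simp only [etaMap] at hj
    rcases Nat.lt_or_ge j.val 6 with h6 | h6
    · simp only [dif_pos h6] at hj
      simpa using hj
    · rcases Nat.lt_or_ge j.val 14 with h14 | h14
      · simp only [dif_neg (by omega : ¬ j.val < 6), dif_pos h14] at hj
        have hxy : x ⟨j.val, j.isLt⟩ = y ⟨j.val, j.isLt⟩ := by omega
        simpa using hxy
      · have hj14 : j.val = 14 := by omega
        simp only [dif_neg (by omega : ¬ j.val < 6),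
          dif_neg (by omega : ¬ j.val < 14)] at hj
        have : j = ⟨14, by omega⟩ := Fin.ext hj14
        rw [this]
        exact hj
  · intro x y
    rw [pairY, eta_eq, eta_eq, Matrix.dotProduct_mulVec, Matrix.dotProduct_mulVec,
      Matrix.vecMul_vecMul, ← Matrix.vecMul_transpose, Matrix.vecMul_vecMul,
      ← Matrix.dotProduct_mulVec, ← Matrix.mul_assoc, key, pairFix,
      Matrix.smul_mulVec, dotProduct_smul, smul_eq_mul]
  · refine ⟨fun i => if i.val = 6 then 1 else 0, ?_, ?_⟩
    · rintro ⟨x, hx⟩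
      have hx6 := congrFun hx ⟨6, by omega⟩
      simp only [etaMap] at hx6
      rw [dif_neg (by omega), dif_pos (by omega)] at hx6
      simp at hx6
      omega
    · refine ⟨fun j => if j.val = 6 then 1 else 0, ?_⟩
      funext i
      simp only [etaMap, Pi.smul_apply, smul_eq_mul]
      rcases Nat.lt_or_ge i.val 6 with h6 | h6
      · rw [dif_pos h6]
        simp [show i.val ≠ 6 by omega]
      · rcases Nat.lt_or_ge i.val 14 with h14 | h14
        · rw [dif_neg (by omega), dif_pos h14]
        · rw [dif_neg (by omega), dif_neg (by omega)]
          simp [show i.val ≠ 6 by omega]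
end

section
/- Let Λ_Y denote the integral lattice ℤ^16 equipped with the symmetric bilinear form whose Gram matrix is block diagonal with: three 2×2 blocks [[0,2],[2,0]], one 8×8 block equal to the negative of the Cartan matrix of E8, and two 1×1 blocks (−2). Let L_0 denote the first standard basis vector of the first 2×2 block, let L_1 denote the sum of the two standard basis vectors of the first 2×2 block, and let e_2 be any element of the E8 block of coordinates with (e_2, e_2) = −4 whose pairing with some standard basis vector of the E8 block is odd. Then L_0 and L_1 + e_2 are both primitive isotropic vectors, the divisibility of L_0 equals 2, the divisibility of L_1 + e_2 equals 1, and consequently there is no ℤ-linear automorphism g of Λ_Y preserving the bilinear form with g(L_0) = L_1 + e_2. -/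
open Matrix

/-- `v` is primitive: it is not a multiple `n • w` with `n ≥ 2`. -/
def IsPrimitive (v : Fin 16 → ℤ) : Prop :=
  ∀ n : ℤ, 2 ≤ n → ∀ w : Fin 16 → ℤ, v ≠ n • w

/-- `d` is the divisibility of `v`: the nonnegative generator of the ideal
`{(v,x) : x ∈ Λ_Y}`. -/
def HasDivisibility (v : Fin 16 → ℤ) (d : ℤ) : Prop :=
  0 ≤ d ∧ (∀ x : Fin 16 → ℤ, d ∣ pairY v x) ∧
    ∀ c : ℤ, (∀ x : Fin 16 → ℤ, c ∣ pairY v x) → c ∣ d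

/-- The first standard basis vector of the first `U(2)` block. -/
def L0 : Fin 16 → ℤ := Pi.single 0 1

/-- The sum of the two standard basis vectors of the first `U(2)` block. -/
def L1 : Fin 16 → ℤ := Pi.single 0 1 + Pi.single 1 1

/-!
`L0` pairs with every vector to an even number, while `L1 + e2` pairs to `2` with the second
basis vector of the first `U(2)` block and to an odd number with some vector of the `E8` block.
So `div L0 = 2` and `div (L1 + e2) = 1`; divisibility is invariant under isometries of the
lattice, hence no isometry maps `L0` to `L1 + e2`.
-/

theorem isPrimitive_of_apply_eq_one {v : Fin 16 → ℤ} {i : Fin 16} (hv : v i = 1) :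
    IsPrimitive v := by
  rintro n hn w rfl
  have hn1 : n ∣ 1 := ⟨w i, by simpa using hv.symm⟩
  have := Int.le_of_dvd one_pos hn1
  omega

theorem HasDivisibility.unique {v : Fin 16 → ℤ} {d₁ d₂ : ℤ}
    (h₁ : HasDivisibility v d₁) (h₂ : HasDivisibility v d₂) : d₁ = d₂ :=
  Int.dvd_antisymm h₁.1 h₂.1 (h₂.2.2 d₁ h₁.2.1) (h₁.2.2 d₂ h₂.2.1)

theorem HasDivisibility.of_pairY_eq {v x₀ : Fin 16 → ℤ} {d : ℤ} (hd : 0 ≤ d)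
    (hdvd : ∀ x, d ∣ pairY v x) (hx₀ : pairY v x₀ = d) : HasDivisibility v d :=
  ⟨hd, hdvd, fun _ hc => hx₀ ▸ hc x₀⟩

theorem hasDivisibility_one_of_isCoprime {v x y : Fin 16 → ℤ}
    (h : IsCoprime (pairY v x) (pairY v y)) : HasDivisibility v 1 :=
  ⟨zero_le_one, fun _ => one_dvd _, fun _ hc =>
    isUnit_iff_dvd_one.mp (h.isUnit_of_dvd' (hc x) (hc y))⟩

theorem HasDivisibility.map_isometry {g : (Fin 16 → ℤ) → Fin 16 → ℤ}
    (hsurj : Function.Surjective g) (hg : ∀ x y, pairY (g x) (g y) = pairY x y)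
    {v : Fin 16 → ℤ} {d : ℤ} (h : HasDivisibility v d) : HasDivisibility (g v) d := by
  refine ⟨h.1, fun x => ?_, fun c hc => h.2.2 c fun y => ?_⟩
  · obtain ⟨y, rfl⟩ := hsurj x
    exact hg v y ▸ h.2.1 y
  · exact hg v y ▸ hc (g y)

theorem gramY_isSymm : GramY.IsSymm := by decide

theorem pairY_comm (x y : Fin 16 → ℤ) : pairY x y = pairY y x := by
  rw [pairY, pairY, dotProduct_mulVec, ← gramY_isSymm, vecMul_transpose, dotProduct_comm,
    gramY_isSymm.eq]

theorem pairY_add_left (x y z : Fin 16 → ℤ) : pairY (x + y) z = pairY x z + pairY y z :=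
  add_dotProduct x y _

theorem pairY_add_right (x y z : Fin 16 → ℤ) : pairY x (y + z) = pairY x y + pairY x z := by
  rw [pairY, pairY, pairY, mulVec_add, dotProduct_add]

theorem pairY_single_zero (x : Fin 16 → ℤ) : pairY (Pi.single 0 1) x = 2 * x 1 := by
  have hrow : ∀ j : Fin 16, GramY 0 j = if j = 1 then 2 else 0 := by decide
  rw [pairY, single_dotProduct, one_mul, mulVec, dotProduct,
    Finset.sum_congr rfl fun j _ => by rw [hrow j]]
  simp [ite_mul]

theorem pairY_single_one (x : Fin 16 → ℤ) : pairY (Pi.single 1 1) x = 2 * x 0 := by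
  have hrow : ∀ j : Fin 16, GramY 1 j = if j = 0 then 2 else 0 := by decide
  rw [pairY, single_dotProduct, one_mul, mulVec, dotProduct,
    Finset.sum_congr rfl fun j _ => by rw [hrow j]]
  simp [ite_mul]

theorem pairY_L0 (x : Fin 16 → ℤ) : pairY L0 x = 2 * x 1 :=
  pairY_single_zero x

theorem pairY_L1 (x : Fin 16 → ℤ) : pairY L1 x = 2 * (x 0 + x 1) := by
  rw [L1, pairY_add_left, pairY_single_zero, pairY_single_one]
  ring

section

variable {e : Fin 16 → ℤ}

theorem pairY_L0_self : pairY L0 L0 = 0 := by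
  rw [pairY_L0]
  simp [L0]

theorem hasDivisibility_L0 : HasDivisibility L0 2 :=
  .of_pairY_eq (x₀ := Pi.single 1 1) zero_le_two (fun x => ⟨x 1, pairY_L0 x⟩)
    (by simp [pairY_L0])

theorem pairY_L1_add_self (h0 : e 0 = 0) (h1 : e 1 = 0) (hsq : pairY e e = -4) :
    pairY (L1 + e) (L1 + e) = 0 := by
  rw [pairY_add_left, pairY_add_right, pairY_add_right, pairY_comm e L1, pairY_L1, pairY_L1,
    hsq, h0, h1]
  simp [L1]

theorem hasDivisibility_L1_add (h0 : e 0 = 0) {j : Fin 16} (hj : 2 ≤ j.val)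
    (hodd : Odd (pairY e (Pi.single j 1))) : HasDivisibility (L1 + e) 1 := by
  have hj0 : j ≠ 0 := Fin.ne_of_val_ne (by omega)
  have hj1 : j ≠ 1 := Fin.ne_of_val_ne (by omega)
  refine hasDivisibility_one_of_isCoprime (x := Pi.single 1 1) (y := Pi.single j 1) ?_
  have hpair_one : pairY (L1 + e) (Pi.single 1 1) = 2 := by
    rw [pairY_add_left, pairY_L1, pairY_comm, pairY_single_one, h0]
    simp
  have hpair_j : pairY (L1 + e) (Pi.single j 1) = pairY e (Pi.single j 1) := by
    rw [pairY_add_left, pairY_L1]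
    simp [hj0, hj1]
  rw [hpair_one, hpair_j]
  exact Int.isCoprime_two_left.mpr hodd

end

theorem stmt2 (e2 : Fin 16 → ℤ)
    (hsupp : ∀ i : Fin 16, (i.val < 6 ∨ 14 ≤ i.val) → e2 i = 0)
    (hsq : pairY e2 e2 = -4)
    (hodd : ∃ j : Fin 16, 6 ≤ j.val ∧ j.val < 14 ∧ Odd (pairY e2 (Pi.single j 1))) :
    IsPrimitive L0 ∧ pairY L0 L0 = 0 ∧
    IsPrimitive (L1 + e2) ∧ pairY (L1 + e2) (L1 + e2) = 0 ∧
    HasDivisibility L0 2 ∧ HasDivisibility (L1 + e2) 1 ∧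
    ¬ ∃ g : (Fin 16 → ℤ) ≃ₗ[ℤ] (Fin 16 → ℤ),
        (∀ x y : Fin 16 → ℤ, pairY (g x) (g y) = pairY x y) ∧ g L0 = L1 + e2 := by
  have h0 : e2 0 = 0 := hsupp 0 (Or.inl (by decide))
  have h1 : e2 1 = 0 := hsupp 1 (Or.inl (by decide))
  obtain ⟨j, hj, -, hj_odd⟩ := hodd
  have hdiv := hasDivisibility_L1_add h0 (by omega : 2 ≤ j.val) hj_odd
  refine ⟨isPrimitive_of_apply_eq_one (i := 0) (by simp [L0]), pairY_L0_self,
    isPrimitive_of_apply_eq_one (i := 0) (by simp [L1, h0]), pairY_L1_add_self h0 h1 hsq,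
    hasDivisibility_L0, hdiv, ?_⟩
  rintro ⟨g, hg, hgL0⟩
  have h2 := hasDivisibility_L0.map_isometry g.surjective hg
  rw [hgL0] at h2
  exact absurd (h2.unique hdiv) (by norm_num)
end
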